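/- arXiv:1503.04616 — 2 statements merged into one kernel-verified Lean document; each statement's English description precedes it below -/
import Mathlib

section
/- Assume 0 ∈ 𝒟_φ and set m = ϑ(ℤ). Then for every C > 0, lim_{n→∞} n^C m^{−n} ∑_{k ∈ ℤ, |k − nφ'(0)| ≥ n^{3/4}} ϑ^{*n}({k}) = 0. -/
open Real Filter Topology MeasureTheory Metric Set

noncomputable section

/-- The cumulant generating function `φ(β) = log ∑_{k∈ℤ} e^{βk} θ(k)` of the measure on `ℤ`
with mass function `θ`.  (Outside the finiteness set the `tsum` is junk; the statements only
use `cgf` on the finiteness set or its interior.) -/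
def cgf (θ : ℤ → ℝ) (β : ℝ) : ℝ := Real.log (∑' k : ℤ, Real.exp (β * k) * θ k)

/-- The set `{β : φ(β) < ∞}`. -/
def finiteSet (θ : ℤ → ℝ) : Set ℝ := {β : ℝ | Summable fun k : ℤ => Real.exp (β * k) * θ k}

/-- `𝒟_φ`, the interior of the set where `φ` is finite. -/
def cgfDom (θ : ℤ → ℝ) : Set ℝ := interior (finiteSet θ)

/-- `κ_j(β) = φ^{(j)}(β)`. -/
def kappa (θ : ℤ → ℝ) (j : ℕ) (β : ℝ) : ℝ := iteratedDeriv j (cgf θ) β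

/-- `μ(β) = φ'(β)`. -/
def muT (θ : ℤ → ℝ) (β : ℝ) : ℝ := deriv (cgf θ) β

/-- `σ(β) = √(φ''(β))`. -/
def sigmaT (θ : ℤ → ℝ) (β : ℝ) : ℝ := Real.sqrt (iteratedDeriv 2 (cgf θ) β)

/-- The standardized coordinate `x_n(k) = (k - μ(β) n)/(σ(β) √n)`. -/
def xnk (θ : ℤ → ℝ) (β : ℝ) (n : ℕ) (k : ℤ) : ℝ :=
  ((k : ℝ) - muT θ β * n) / (sigmaT θ β * Real.sqrt n)

/-- The support of `θ` contains at least two points. -/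
def twoPointSupport (θ : ℤ → ℝ) : Prop := ∃ k₁ k₂ : ℤ, k₁ ≠ k₂ ∧ θ k₁ ≠ 0 ∧ θ k₂ ≠ 0

/-- `θ` has lattice span 1: there is no `h ∈ {2,3,…}` and `a ∈ ℤ` such that `θ` is
concentrated on the arithmetic progression `a + hℤ`. -/
def latticeSpanOne (θ : ℤ → ℝ) : Prop :=
  ¬ ∃ (h : ℕ) (a : ℤ), 2 ≤ h ∧ ∀ k : ℤ, θ k ≠ 0 → (h : ℤ) ∣ (k - a)

/-- `n`-fold convolution power of the measure with mass function `θ`. -/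
def convPow (θ : ℤ → ℝ) : ℕ → ℤ → ℝ
  | 0, k => if k = 0 then 1 else 0
  | n + 1, k => ∑' j : ℤ, convPow θ n j * θ (k - j)

/-- The Edgeworth polynomials `P̃_j(z)`, characterized by the formal power series identity
`exp (∑_{j≥1} κ_{j+2} z^{j+2} u^j / (j+2)!) = ∑_{j≥0} P̃_j(z) u^j` in `u`; equivalently
(differentiating the identity in `u` and comparing coefficients) by `P̃_0 = 1` together with the
recursion `(j+1) P̃_{j+1}(z) = ∑_{i=0}^{j} (i+1) (κ_{i+3} z^{i+3}/(i+3)!) P̃_{j-i}(z)`. -/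
def edgeworthP (κ : ℕ → ℝ) : ℕ → Polynomial ℝ
  | 0 => 1
  | j + 1 =>
      Polynomial.C (((j : ℝ) + 1)⁻¹) *
        ∑ i ∈ Finset.range (j + 1),
          Polynomial.C (((i : ℝ) + 1) * (κ (i + 3) / (Nat.factorial (i + 3)))) *
            Polynomial.X ^ (i + 3) * edgeworthP κ (j - i)
  termination_by j => j
  decreasing_by omega

/-- Substituting the operator `-s⁻¹ d/dx` for the variable of the polynomial `P` and applying
the result to the Gaussian kernel `e^{-x²/2}` produces `(gaussianSubst s P).eval x * e^{-x²/2}`: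
indeed, since `(-d/dx)^l e^{-x²/2} = He_l(x) e^{-x²/2}` (probabilists' Hermite polynomials),
the monomial `z^l` contributes `s⁻ˡ He_l(x)`. -/
def gaussianSubst (s : ℝ) (P : Polynomial ℝ) : Polynomial ℝ :=
  ∑ l ∈ Finset.range (P.natDegree + 1),
    Polynomial.C (P.coeff l * s⁻¹ ^ l) * (Polynomial.hermite l).map (Int.castRingHom ℝ)

/-- `q_j(·;β)`, determined by `[P̃_j(-σ(β)⁻¹ d/dx; β) e^{-x²/2}](x) = q_j(x;β) e^{-x²/2}`. -/
def qpoly (θ : ℤ → ℝ) (j : ℕ) (β : ℝ) : Polynomial ℝ :=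
  gaussianSubst (sigmaT θ β) (edgeworthP (fun i => kappa θ i β) j)

/-- `Q_{m,j}(·;β)`, determined by
`[(-σ(β)⁻¹ d/dx)^m P̃_{j-m}(-σ(β)⁻¹ d/dx; β) e^{-x²/2}](x) = Q_{m,j}(x;β) e^{-x²/2}`. -/
def Qpoly (θ : ℤ → ℝ) (m j : ℕ) (β : ℝ) : Polynomial ℝ :=
  gaussianSubst (sigmaT θ β) (Polynomial.X ^ m * edgeworthP (fun i => kappa θ i β) (j - m))

/-- `f_n(s;β)`, the characteristic function of the standardized sum
`(S_n^β - nμ(β))/(σ(β)√n)` of `n` i.i.d. copies of the exponentially tilted variable `Z^β`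
with law `P[Z^β = k] = e^{βk - φ(β)} θ(k)`; by independence it equals the `n`-th power of the
characteristic function of one standardized summand.  (The formula makes sense for complex `s`.) -/
def charFn (θ : ℤ → ℝ) (n : ℕ) (s : ℂ) (β : ℝ) : ℂ :=
  (∑' k : ℤ,
      Complex.exp (Complex.I * s * ((((k : ℝ) - muT θ β) : ℝ) : ℂ) /
        (((sigmaT θ β * Real.sqrt n : ℝ)) : ℂ)) *
      ((Real.exp (β * k - cgf θ β) * θ k : ℝ) : ℂ)) ^ n

/-- `Φ(z) = ∑_{k∈ℤ} e^{zk} θ(k)`. -/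
def PhiC (θ : ℤ → ℝ) (z : ℂ) : ℂ := ∑' k : ℤ, Complex.exp (z * k) * (θ k : ℂ)

/-!
Chernoff's method. The tilted sums `A(β) = ∑ₖ e^{βk} θ(k)` turn convolution into multiplication,
so `∑ₖ e^{βk} ϑ^{*n}(k) = A(β)ⁿ`, and exponential Markov on both tails gives
`ϑ^{*n}{|k - nμ| ≥ t} ≤ e^{-β(nμ+t)} A(β)ⁿ + e^{β(nμ-t)} A(-β)ⁿ` for `β ≥ 0`.
Because `0 ∈ 𝒟_φ`, a second-order Taylor bound gives `A(β) ≤ m e^{βμ + Kβ²}` near `0` with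
`μ = φ'(0)`, so the tail is at most `2 mⁿ e^{nKβ² - βt}`. The tilt `β = δt/n` with `δ` small
turns this into `2 mⁿ e^{-c t²/n}`, which for `t = n^{3/4}` is `2 mⁿ e^{-c√n}` and beats every
power of `n`.
-/

def expMoment (θ : ℤ → ℝ) (β : ℝ) : ℝ := ∑' k : ℤ, exp (β * k) * θ k

lemma expMoment_zero (θ : ℤ → ℝ) : expMoment θ 0 = ∑' k : ℤ, θ k := by
  simp [expMoment]

lemma abs_exp_sub_one_sub_le (x : ℝ) : |exp x - 1 - x| ≤ x ^ 2 * exp |x| := by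
  have h := Complex.norm_exp_sub_sum_le_norm_mul_exp (x : ℂ) 2
  simp only [Finset.sum_range_succ, Finset.sum_range_zero] at h
  norm_num at h
  rw [← Complex.ofReal_exp, ← sub_sub] at h
  exact_mod_cast h

lemma sq_mul_exp_half_le {ε : ℝ} (hε : 0 < ε) (y : ℝ) :
    y ^ 2 * exp (ε / 2 * |y|) ≤ 8 / ε ^ 2 * exp (ε * |y|) := by
  set z := ε / 2 * |y| with hz
  have hz0 : 0 ≤ z := by positivity
  have hy : y ^ 2 = 4 / ε ^ 2 * z ^ 2 := by
    rw [hz, mul_pow, sq_abs]; field_simp; ring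
  have hexp : exp (ε * |y|) = exp z * exp z := by rw [← exp_add, hz]; ring_nf
  have hquad : z ^ 2 / 2 ≤ exp z := by linarith [quadratic_le_exp_of_nonneg hz0]
  rw [hy, hexp]
  have := exp_pos z
  calc 4 / ε ^ 2 * z ^ 2 * exp z = 8 / ε ^ 2 * (z ^ 2 / 2) * exp z := by ring
    _ ≤ 8 / ε ^ 2 * exp z * exp z := by gcongr
    _ = _ := by ring

lemma HasSum.tsum_mul_sub_of_nonneg {f g : ℤ → ℝ} {a b : ℝ} (hf : HasSum f a) (hg : HasSum g b)
    (hf0 : ∀ k, 0 ≤ f k) (hg0 : ∀ k, 0 ≤ g k) :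
    HasSum (fun k => ∑' j, f j * g (k - j)) (a * b) := by
  have hprod := hf.mul hg (hf.summable.mul_of_nonneg hg.summable hf0 hg0)
  let e : ℤ × ℤ ≃ ℤ × ℤ :=
    { toFun := fun p => (p.2, p.1 - p.2)
      invFun := fun q => (q.1 + q.2, q.1)
      left_inv := fun p => by simp
      right_inv := fun q => by simp }
  have hshear : HasSum (fun p : ℤ × ℤ => f p.2 * g (p.1 - p.2)) (a * b) :=
    e.hasSum_iff.mpr hprod
  exact hshear.prod_fiberwise fun k => (hshear.summable.prod_factor k).hasSum

lemma convPow_nonneg {θ : ℤ → ℝ} (hθ0 : ∀ k, 0 ≤ θ k) : ∀ n k, 0 ≤ convPow θ n k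
  | 0 => fun k => by by_cases hk : k = 0 <;> simp [convPow, hk]
  | n + 1 => fun k => tsum_nonneg fun j => mul_nonneg (convPow_nonneg hθ0 n j) (hθ0 _)

lemma hasSum_exp_mul_convPow {θ : ℤ → ℝ} {β : ℝ} (hθ0 : ∀ k, 0 ≤ θ k)
    (hβ : Summable fun k : ℤ => exp (β * k) * θ k) (n : ℕ) :
    HasSum (fun k : ℤ => exp (β * k) * convPow θ n k) (expMoment θ β ^ n) := by
  induction n with
  | zero =>
    rw [pow_zero]
    convert hasSum_ite_eq (0 : ℤ) (1 : ℝ) using 2 with k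
    by_cases hk : k = 0 <;> simp [convPow, hk]
  | succ n ih =>
    have hsplit : ∀ k : ℤ, exp (β * k) * convPow θ (n + 1) k =
        ∑' j : ℤ, exp (β * j) * convPow θ n j * (exp (β * ↑(k - j)) * θ (k - j)) := by
      intro k
      rw [convPow, ← tsum_mul_left]
      refine tsum_congr fun j => ?_
      have : exp (β * k) = exp (β * j) * exp (β * ↑(k - j)) := by
        rw [← exp_add]; push_cast; ring_nf
      rw [this]; ring
    rw [funext hsplit, pow_succ]
    exact ih.tsum_mul_sub_of_nonneg hβ.hasSum
      (fun k => mul_nonneg (exp_nonneg _) (convPow_nonneg hθ0 n k))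
      (fun k => mul_nonneg (exp_nonneg _) (hθ0 k))

lemma tsum_tail_le_exp_mul_tsum {p : ℤ → ℝ} (hp0 : ∀ k, 0 ≤ p k) {β : ℝ} (hβ : 0 ≤ β) (a t : ℝ)
    (hpos : Summable fun k : ℤ => exp (β * k) * p k)
    (hneg : Summable fun k : ℤ => exp (-β * k) * p k) :
    ∑' k : {k : ℤ | t ≤ |(k : ℝ) - a|}, p k ≤
      exp (-β * (a + t)) * ∑' k : ℤ, exp (β * k) * p k +
        exp (β * (a - t)) * ∑' k : ℤ, exp (-β * k) * p k := by
  set S := {k : ℤ | t ≤ |(k : ℝ) - a|}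
  have hF := (hpos.mul_left (exp (-β * (a + t)))).add (hneg.mul_left (exp (β * (a - t))))
  -- on `S` one of the two exponential weights is at least `1`
  have hdom : ∀ k, S.indicator p k ≤
      exp (-β * (a + t)) * (exp (β * k) * p k) + exp (β * (a - t)) * (exp (-β * k) * p k) := by
    intro k
    have hF1 : exp (-β * (a + t)) * (exp (β * k) * p k) = exp (β * (k - a - t)) * p k := by
      rw [← mul_assoc, ← exp_add]; ring_nf
    have hF2 : exp (β * (a - t)) * (exp (-β * k) * p k) = exp (β * (a - k - t)) * p k := by
      rw [← mul_assoc, ← exp_add]; ring_nf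
    have hpk := hp0 k
    rw [hF1, hF2]
    by_cases hk : k ∈ S
    · rw [Set.indicator_of_mem hk]
      rcases le_abs'.mp (show t ≤ |(k : ℝ) - a| from hk) with h | h
      · have : 1 ≤ exp (β * (a - k - t)) := one_le_exp (by nlinarith)
        nlinarith [exp_nonneg (β * (k - a - t))]
      · have : 1 ≤ exp (β * (k - a - t)) := one_le_exp (by nlinarith)
        nlinarith [exp_nonneg (β * (a - k - t))]
    · rw [Set.indicator_of_notMem hk]
      positivity
  calc ∑' k : S, p k = ∑' k, S.indicator p k := tsum_subtype S p
    _ ≤ _ := (hF.of_nonneg_of_le (Set.indicator_nonneg fun k _ => hp0 k) hdom).tsum_le_tsum hdom hF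
    _ = _ := by
      rw [(hpos.mul_left _).tsum_add (hneg.mul_left _), tsum_mul_left, tsum_mul_left]

section ExpMoment

variable {θ : ℤ → ℝ} {ε : ℝ}

lemma exists_summable_exp_mul_abs (hθ0 : ∀ k, 0 ≤ θ k) (h0 : (0 : ℝ) ∈ cgfDom θ) :
    ∃ ε > 0, Summable fun k : ℤ => exp (ε * |(k : ℝ)|) * θ k := by
  obtain ⟨r, hr, hball⟩ := Metric.mem_nhds_iff.mp (mem_interior_iff_mem_nhds.mp h0)
  have hmem : ∀ β, |β| < r → Summable fun k : ℤ => exp (β * k) * θ k := fun β hβ =>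
    hball (by rwa [mem_ball_zero_iff, Real.norm_eq_abs])
  have hr2 : |r / 2| < r := by rw [abs_of_pos (half_pos hr)]; linarith
  refine ⟨r / 2, half_pos hr,
    ((hmem _ hr2).add (hmem (-(r / 2)) (by rwa [abs_neg]))).of_nonneg_of_le
      (fun k => mul_nonneg (exp_nonneg _) (hθ0 k)) fun k => ?_⟩
  have hpos := mul_nonneg (exp_nonneg (r / 2 * k)) (hθ0 k)
  have hneg := mul_nonneg (exp_nonneg (-(r / 2) * k)) (hθ0 k)
  rcases abs_cases (k : ℝ) with ⟨h, _⟩ | ⟨h, _⟩ <;> rw [h]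
  · linarith
  · rw [mul_neg, ← neg_mul]; linarith

lemma summable_exp_mul_of_abs_le (hθ0 : ∀ k, 0 ≤ θ k)
    (hE : Summable fun k : ℤ => exp (ε * |(k : ℝ)|) * θ k) {β : ℝ} (hβ : |β| ≤ ε) :
    Summable fun k : ℤ => exp (β * k) * θ k :=
  hE.of_nonneg_of_le (fun k => mul_nonneg (exp_nonneg _) (hθ0 k)) fun k =>
    mul_le_mul_of_nonneg_right (exp_le_exp.mpr <| (le_abs_self _).trans <| by
      rw [abs_mul]; exact mul_le_mul_of_nonneg_right hβ (abs_nonneg _)) (hθ0 k)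

lemma summable_of_summable_exp_mul_abs (hε : 0 ≤ ε) (hθ0 : ∀ k, 0 ≤ θ k)
    (hE : Summable fun k : ℤ => exp (ε * |(k : ℝ)|) * θ k) : Summable θ := by
  simpa using summable_exp_mul_of_abs_le hθ0 hE (β := 0) (by simpa using hε)

lemma summable_sq_mul_exp_half_mul (hε : 0 < ε) (hθ0 : ∀ k, 0 ≤ θ k)
    (hE : Summable fun k : ℤ => exp (ε * |(k : ℝ)|) * θ k) :
    Summable fun k : ℤ => (k : ℝ) ^ 2 * exp (ε / 2 * |(k : ℝ)|) * θ k :=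
  (hE.mul_left (8 / ε ^ 2)).of_nonneg_of_le (fun k => by have := hθ0 k; positivity) fun k => by
    rw [← mul_assoc]; exact mul_le_mul_of_nonneg_right (sq_mul_exp_half_le hε k) (hθ0 k)

lemma summable_intCast_mul (hε : 0 < ε) (hθ0 : ∀ k, 0 ≤ θ k)
    (hE : Summable fun k : ℤ => exp (ε * |(k : ℝ)|) * θ k) :
    Summable fun k : ℤ => (k : ℝ) * θ k := by
  have hθ := summable_of_summable_exp_mul_abs hε.le hθ0 hE
  refine (hθ.add (summable_sq_mul_exp_half_mul hε hθ0 hE)).of_norm_bounded fun k => ?_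
  rw [Real.norm_eq_abs, abs_mul, abs_of_nonneg (hθ0 k)]
  have h1 : 1 ≤ exp (ε / 2 * |(k : ℝ)|) := one_le_exp (by positivity)
  have hk : |(k : ℝ)| ≤ 1 + (k : ℝ) ^ 2 * exp (ε / 2 * |(k : ℝ)|) := by
    nlinarith [sq_abs (k : ℝ), sq_nonneg (|(k : ℝ)| - 1)]
  nlinarith [hθ0 k]

lemma abs_expMoment_sub_le (hε : 0 < ε) (hθ0 : ∀ k, 0 ≤ θ k)
    (hE : Summable fun k : ℤ => exp (ε * |(k : ℝ)|) * θ k) {β : ℝ} (hβ : |β| ≤ ε / 2) :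
    |expMoment θ β - expMoment θ 0 - β * ∑' k : ℤ, (k : ℝ) * θ k| ≤
      β ^ 2 * ∑' k : ℤ, (k : ℝ) ^ 2 * exp (ε / 2 * |(k : ℝ)|) * θ k := by
  have hpt : ∀ k : ℤ, ‖(exp (β * k) - 1 - β * k) * θ k‖ ≤
      β ^ 2 * ((k : ℝ) ^ 2 * exp (ε / 2 * |(k : ℝ)|) * θ k) := by
    intro k
    have hθk := hθ0 k
    rw [Real.norm_eq_abs, abs_mul, abs_of_nonneg hθk]
    calc |exp (β * k) - 1 - β * k| * θ k ≤ (β * k) ^ 2 * exp |β * k| * θ k := by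
          gcongr; exact abs_exp_sub_one_sub_le _
      _ ≤ (β * k) ^ 2 * exp (ε / 2 * |(k : ℝ)|) * θ k := by
          gcongr; rw [abs_mul]; exact mul_le_mul_of_nonneg_right hβ (abs_nonneg _)
      _ = _ := by ring
  have hβε : |β| ≤ ε := hβ.trans (by linarith)
  have hθ := summable_of_summable_exp_mul_abs hε.le hθ0 hE
  have hrepr : expMoment θ β - expMoment θ 0 - β * ∑' k : ℤ, (k : ℝ) * θ k =
      ∑' k : ℤ, (exp (β * k) - 1 - β * k) * θ k := by
    rw [expMoment_zero, expMoment, ← tsum_mul_left,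
      ← (summable_exp_mul_of_abs_le hθ0 hE hβε).tsum_sub hθ,
      ← ((summable_exp_mul_of_abs_le hθ0 hE hβε).sub hθ).tsum_sub
        ((summable_intCast_mul hε hθ0 hE).mul_left β)]
    exact tsum_congr fun k => by ring
  rw [hrepr, ← Real.norm_eq_abs, ← tsum_mul_left]
  exact tsum_of_norm_bounded ((summable_sq_mul_exp_half_mul hε hθ0 hE).mul_left _).hasSum hpt

lemma hasDerivAt_expMoment_zero (hε : 0 < ε) (hθ0 : ∀ k, 0 ≤ θ k)
    (hE : Summable fun k : ℤ => exp (ε * |(k : ℝ)|) * θ k) :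
    HasDerivAt (expMoment θ) (∑' k : ℤ, (k : ℝ) * θ k) 0 := by
  rw [hasDerivAt_iff_isLittleO_nhds_zero]
  refine Asymptotics.IsBigO.trans_isLittleO ?_ (Asymptotics.isLittleO_pow_id one_lt_two)
  refine Asymptotics.IsBigO.of_bound (∑' k : ℤ, (k : ℝ) ^ 2 * exp (ε / 2 * |(k : ℝ)|) * θ k) ?_
  filter_upwards [Metric.closedBall_mem_nhds (0 : ℝ) (half_pos hε)] with β hβ
  rw [mem_closedBall_zero_iff, Real.norm_eq_abs] at hβ
  rw [zero_add, smul_eq_mul, Real.norm_eq_abs, norm_pow, Real.norm_eq_abs, sq_abs,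
    mul_comm _ (β ^ 2)]
  exact abs_expMoment_sub_le hε hθ0 hE hβ

lemma deriv_cgf_zero (hε : 0 < ε) (hθ0 : ∀ k, 0 ≤ θ k)
    (hE : Summable fun k : ℤ => exp (ε * |(k : ℝ)|) * θ k) (hm : 0 < ∑' k : ℤ, θ k) :
    deriv (cgf θ) 0 = (∑' k : ℤ, (k : ℝ) * θ k) / ∑' k : ℤ, θ k := by
  rw [← expMoment_zero θ] at hm ⊢
  exact ((hasDerivAt_expMoment_zero hε hθ0 hE).log hm.ne').deriv

lemma exists_expMoment_le_exp (hε : 0 < ε) (hθ0 : ∀ k, 0 ≤ θ k)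
    (hE : Summable fun k : ℤ => exp (ε * |(k : ℝ)|) * θ k) (hm : 0 < ∑' k : ℤ, θ k) :
    ∃ K ≥ 0, ∀ β, |β| ≤ ε / 2 →
      expMoment θ β ≤ (∑' k : ℤ, θ k) * exp (β * deriv (cgf θ) 0 + K * β ^ 2) := by
  set m := ∑' k : ℤ, θ k
  set M := ∑' k : ℤ, (k : ℝ) ^ 2 * exp (ε / 2 * |(k : ℝ)|) * θ k
  have hM : 0 ≤ M := tsum_nonneg fun k => by have := hθ0 k; positivity
  refine ⟨M / m, div_nonneg hM hm.le, fun β hβ => ?_⟩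
  have hquad := (abs_le.mp (abs_expMoment_sub_le hε hθ0 hE hβ)).2
  rw [expMoment_zero] at hquad
  rw [deriv_cgf_zero hε hθ0 hE hm]
  set x := β * ((∑' k : ℤ, (k : ℝ) * θ k) / m) + M / m * β ^ 2
  calc expMoment θ β ≤ m * (x + 1) := by
        simp only [x]; field_simp; linarith
    _ ≤ m * exp x := by gcongr; exact add_one_le_exp x

end ExpMoment

section Tail

variable {θ : ℤ → ℝ} {r μ K : ℝ}

lemma tsum_convPow_tail_le (hθ0 : ∀ k, 0 ≤ θ k)
    (hsum : ∀ β, |β| ≤ r → Summable fun k : ℤ => exp (β * k) * θ k)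
    (hK : ∀ β, |β| ≤ r → expMoment θ β ≤ (∑' k : ℤ, θ k) * exp (β * μ + K * β ^ 2))
    {β : ℝ} (hβ0 : 0 ≤ β) (hβr : β ≤ r) (n : ℕ) (t : ℝ) :
    ∑' k : {k : ℤ | t ≤ |(k : ℝ) - n * μ|}, convPow θ n k ≤
      2 * (∑' k : ℤ, θ k) ^ n * exp (n * K * β ^ 2 - β * t) := by
  set m := ∑' k : ℤ, θ k
  have hpos := hasSum_exp_mul_convPow hθ0 (hsum β (by rwa [abs_of_nonneg hβ0])) n
  have hneg := hasSum_exp_mul_convPow hθ0 (hsum (-β) (by rwa [abs_neg, abs_of_nonneg hβ0])) n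
  have hpow : ∀ b, |b| ≤ r → expMoment θ b ^ n ≤ m ^ n * exp (n * (b * μ + K * b ^ 2)) := by
    intro b hb
    rw [exp_nat_mul, ← mul_pow]
    exact pow_le_pow_left₀ (tsum_nonneg fun k => mul_nonneg (exp_nonneg _) (hθ0 k)) (hK b hb) n
  calc ∑' k : {k : ℤ | t ≤ |(k : ℝ) - n * μ|}, convPow θ n k
      ≤ exp (-β * (n * μ + t)) * expMoment θ β ^ n +
          exp (β * (n * μ - t)) * expMoment θ (-β) ^ n := by
        rw [← hpos.tsum_eq, ← hneg.tsum_eq]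
        exact tsum_tail_le_exp_mul_tsum (convPow_nonneg hθ0 n) hβ0 _ t hpos.summable
          hneg.summable
    _ ≤ exp (-β * (n * μ + t)) * (m ^ n * exp (n * (β * μ + K * β ^ 2))) +
          exp (β * (n * μ - t)) * (m ^ n * exp (n * (-β * μ + K * (-β) ^ 2))) := by
        gcongr <;> apply hpow <;> simp [abs_of_nonneg hβ0, hβr]
    _ = 2 * m ^ n * exp (n * K * β ^ 2 - β * t) := by
        simp only [mul_left_comm (exp _), ← exp_add]
        ring_nf

lemma exists_tsum_convPow_tail_le (hr : 0 < r) (hK0 : 0 ≤ K) (hθ0 : ∀ k, 0 ≤ θ k)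
    (hm : 0 < ∑' k : ℤ, θ k)
    (hsum : ∀ β, |β| ≤ r → Summable fun k : ℤ => exp (β * k) * θ k)
    (hK : ∀ β, |β| ≤ r → expMoment θ β ≤ (∑' k : ℤ, θ k) * exp (β * μ + K * β ^ 2)) :
    ∃ c > 0, ∀ (n : ℕ) (t : ℝ), 0 < t → t ≤ n →
      ((∑' k : ℤ, θ k) ^ n)⁻¹ * ∑' k : {k : ℤ | t ≤ |(k : ℝ) - n * μ|}, convPow θ n k ≤
        2 * exp (-c * (t ^ 2 / n)) := by
  set δ := min r (1 / (2 * (K + 1)))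
  have hδ : 0 < δ := lt_min hr (by positivity)
  have hKδ : K * δ ≤ 1 / 2 := by
    calc K * δ ≤ K * (1 / (2 * (K + 1))) := by gcongr; exact min_le_right _ _
      _ ≤ 1 / 2 := by rw [mul_one_div, div_le_div_iff₀ (by positivity) two_pos]; linarith
  -- tilt by `β = δ t / n`; the choice of `δ` makes the quadratic term cost at most half
  refine ⟨δ / 2, half_pos hδ, fun n t ht htn => ?_⟩
  have hn : 0 < (n : ℝ) := ht.trans_le htn
  have hβr : δ * t / n ≤ r := by
    rw [mul_div_assoc]
    calc δ * (t / n) ≤ δ * 1 := by gcongr; exact div_le_one_of_le₀ htn hn.le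
      _ ≤ r := by rw [mul_one]; exact min_le_left _ _
  have hexp : n * K * (δ * t / n) ^ 2 - δ * t / n * t ≤ -(δ / 2) * (t ^ 2 / n) := by
    have : n * K * (δ * t / n) ^ 2 - δ * t / n * t = (K * δ - 1) * δ * (t ^ 2 / n) := by
      field_simp
    rw [this]
    have : 0 ≤ δ * (t ^ 2 / n) := by positivity
    nlinarith
  calc _ ≤ ((∑' k : ℤ, θ k) ^ n)⁻¹ *
        (2 * (∑' k : ℤ, θ k) ^ n * exp (n * K * (δ * t / n) ^ 2 - δ * t / n * t)) := by
        gcongr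
        exact tsum_convPow_tail_le hθ0 hsum hK (by positivity) hβr n t
    _ ≤ 2 * exp (-(δ / 2) * (t ^ 2 / n)) := by
        rw [← mul_assoc, mul_left_comm, inv_mul_cancel₀ (pow_pos hm n).ne', mul_one]
        gcongr

end Tail

lemma tendsto_rpow_mul_exp_neg_mul_rpow_half {c : ℝ} (hc : 0 < c) (C : ℝ) :
    Tendsto (fun n : ℕ => (n : ℝ) ^ C * exp (-c * (n : ℝ) ^ (1 / 2 : ℝ))) atTop (𝓝 0) := by
  have hsqrt : Tendsto (fun n : ℕ => (n : ℝ) ^ (1 / 2 : ℝ)) atTop atTop :=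
    (tendsto_rpow_atTop (by norm_num)).comp tendsto_natCast_atTop_atTop
  refine ((tendsto_rpow_mul_exp_neg_mul_atTop_nhds_zero (2 * C) c hc).comp hsqrt).congr fun n => ?_
  simp only [Function.comp_apply]
  rw [← rpow_mul (Nat.cast_nonneg n), show (1 / 2 : ℝ) * (2 * C) = C by ring]

theorem chernoff_tail_convPow_general
    (θ : ℤ → ℝ) (hθ0 : ∀ k, 0 ≤ θ k) (hmass : 0 < ∑' k : ℤ, θ k)
    (h0 : (0 : ℝ) ∈ cgfDom θ) :
    ∀ C : ℝ, 0 < C →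
      Tendsto
        (fun n : ℕ => (n : ℝ) ^ C * ((∑' k : ℤ, θ k) ^ n)⁻¹ *
          ∑' k : {k : ℤ | (n : ℝ) ^ ((3 : ℝ) / 4) ≤ |(k : ℝ) - n * deriv (cgf θ) 0|},
            convPow θ n k)
        atTop (𝓝 0) := by
  intro C _
  obtain ⟨ε, hε, hE⟩ := exists_summable_exp_mul_abs hθ0 h0
  obtain ⟨K, hK0, hK⟩ := exists_expMoment_le_exp hε hθ0 hE hmass
  obtain ⟨c, hc, htail⟩ := exists_tsum_convPow_tail_le (half_pos hε) hK0 hθ0 hmass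
    (fun β hβ => summable_exp_mul_of_abs_le hθ0 hE (hβ.trans (by linarith))) hK
  have hlim := (tendsto_rpow_mul_exp_neg_mul_rpow_half hc C).const_mul 2
  rw [mul_zero] at hlim
  refine squeeze_zero' (Eventually.of_forall fun n => ?_) ?_ hlim
  · have := convPow_nonneg hθ0 n
    exact mul_nonneg (by positivity) (tsum_nonneg fun k => this k)
  filter_upwards [eventually_ge_atTop 1] with n hn
  have hn1 : (1 : ℝ) ≤ n := by exact_mod_cast hn
  have hwindow : ((n : ℝ) ^ ((3 : ℝ) / 4)) ^ 2 / n = (n : ℝ) ^ (1 / 2 : ℝ) := by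
    rw [← rpow_natCast, ← rpow_mul (by positivity), ← rpow_sub_one (by positivity)]
    norm_num
  have hbound := htail n ((n : ℝ) ^ ((3 : ℝ) / 4)) (by positivity)
    (rpow_le_self_of_one_le hn1 (by norm_num))
  rw [hwindow] at hbound
  rw [mul_assoc]
  calc _ ≤ (n : ℝ) ^ C * (2 * exp (-c * (n : ℝ) ^ (1 / 2 : ℝ))) := by gcongr
    _ = _ := by ring

/-- superpolynomial smallness of the normalized tail mass of `ϑ^{*n}`
outside the window `|k - nφ'(0)| < n^{3/4}`: for every `C > 0`,
`lim_{n→∞} n^C m^{-n} ∑_{|k - nφ'(0)| ≥ n^{3/4}} ϑ^{*n}({k}) = 0`, where `m = ϑ(ℤ)`. -/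
theorem chernoff_tail_convPow
    (θ : ℤ → ℝ) (hθ0 : ∀ k, 0 ≤ θ k) (hθs : Summable θ) (hmass : 0 < ∑' k : ℤ, θ k)
    (h0 : (0 : ℝ) ∈ cgfDom θ) :
    ∀ C : ℝ, 0 < C →
      Tendsto
        (fun n : ℕ => (n : ℝ) ^ C * ((∑' k : ℤ, θ k) ^ n)⁻¹ *
          ∑' k : {k : ℤ | (n : ℝ) ^ ((3 : ℝ) / 4) ≤ |(k : ℝ) - n * deriv (cgf θ) 0|},
            convPow θ n k)
        atTop (𝓝 0) :=
  chernoff_tail_convPow_general θ hθ0 hmass h0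
end
end

section
/- Assume the support of ϑ contains at least two points; let K ⊂ 𝒟_φ be compact, r ∈ ℕ₀ and ε₀ > 0, and let w_n (n ∈ ℕ) and w_∞ be holomorphic functions on U = {z ∈ ℂ : dist(z, K) < 2ε₀}. Assume there are constants A < ∞ and c > 0 such that sup_{dist(z,K) ≤ ε₀} |w_n(z) − w_∞(z)| ≤ A e^{−cn} for all n ∈ ℕ. Then there exist ε > 0 and M < ∞ such that for every β ∈ K, every n ∈ ℕ and every s ∈ ℂ with |s| ≤ ε σ(β) √n: | w_n(β + is/(σ(β)√n)) − ∑_{j=0}^{r} n^{−j/2} (w_∞^{(j)}(β)/j!) (is/σ(β))^j | ≤ M n^{−(r+1)/2} (1 + |s|^{r+1}). -/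
/-!
Write `φ` as Mathlib's cumulant generating function of the identity of `ℤ` under the measure with
masses `θ`. Then `φ''` is analytic on `𝒟_φ`, and it is the variance of the tilted law, positive
because the support has two points; so `σ ≥ m > 0` on the compact set `K`.

With `y = i s / (σ(β) √n)`, the sum in the statement is the degree-`r` Taylor polynomial of `w_∞`
at `β` evaluated at `y`, and `|y| ≤ ε₀ / 2`. Cauchy's estimates on the discs of radius `ε₀` about
the points of `K`, with one bound for `w_∞` on the compact `ε₀`-thickening of `K`, bound the
Taylor remainder by `C |y|^{r+1} ≤ C m^{-(r+1)} n^{-(r+1)/2} |s|^{r+1}` uniformly in `β`, and the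
exponentially small `w_n - w_∞` is `O(n^{-(r+1)/2})`.
-/

open Real Filter Topology MeasureTheory Metric Set

noncomputable section

open scoped ENNReal Nat

def massMeasure (θ : ℤ → ℝ) : Measure ℤ :=
  Measure.count.withDensity fun k => ((θ k).toNNReal : ℝ≥0∞)

section massMeasure

variable {θ : ℤ → ℝ}

lemma integrable_massMeasure_iff (hθ : ∀ k, 0 ≤ θ k) {g : ℤ → ℝ} :
    Integrable g (massMeasure θ) ↔ Summable fun k => g k * θ k := by
  rw [massMeasure, integrable_withDensity_iff_integrable_smul .of_discrete, integrable_count_iff]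
  refine (summable_congr fun k => ?_).trans summable_abs_iff
  simp [NNReal.smul_def, Real.coe_toNNReal _ (hθ k), abs_mul, abs_of_nonneg (hθ k), mul_comm]

lemma integral_massMeasure (hθ : ∀ k, 0 ≤ θ k) (g : ℤ → ℝ) :
    ∫ k, g k ∂massMeasure θ = ∑' k, g k * θ k := by
  by_cases hg : Integrable g (massMeasure θ)
  · rw [integral_countable hg]
    congr 1 with k
    simp [massMeasure, Measure.real, Real.coe_toNNReal _ (hθ k), mul_comm]
  · rw [integral_undef hg, tsum_eq_zero_of_not_summable ((integrable_massMeasure_iff hθ).not.mp hg)]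

lemma finiteSet_eq_integrableExpSet (hθ : ∀ k, 0 ≤ θ k) :
    finiteSet θ = ProbabilityTheory.integrableExpSet (fun k : ℤ => (k : ℝ)) (massMeasure θ) := by
  ext β
  exact (integrable_massMeasure_iff hθ).symm

lemma cgf_eq_cgf_massMeasure (hθ : ∀ k, 0 ≤ θ k) :
    cgf θ = ProbabilityTheory.cgf (fun k : ℤ => (k : ℝ)) (massMeasure θ) := by
  ext β
  rw [ProbabilityTheory.cgf, ProbabilityTheory.mgf, integral_massMeasure hθ, cgf]

lemma continuousOn_iteratedDeriv_two_cgf (hθ : ∀ k, 0 ≤ θ k) :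
    ContinuousOn (iteratedDeriv 2 (cgf θ)) (cgfDom θ) := by
  rw [cgfDom, finiteSet_eq_integrableExpSet hθ, cgf_eq_cgf_massMeasure hθ, iteratedDeriv_eq_iterate]
  exact (ProbabilityTheory.analyticOnNhd_cgf.iterated_deriv 2).continuousOn

lemma iteratedDeriv_two_cgf_pos (hθ : ∀ k, 0 ≤ θ k) (hsupp : twoPointSupport θ) {β : ℝ}
    (hβ : β ∈ cgfDom θ) : 0 < iteratedDeriv 2 (cgf θ) β := by
  rw [cgfDom, finiteSet_eq_integrableExpSet hθ] at hβ
  rw [cgf_eq_cgf_massMeasure hθ, ProbabilityTheory.iteratedDeriv_two_cgf_eq_integral hβ,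
    ProbabilityTheory.mgf, integral_massMeasure hθ, integral_massMeasure hθ]
  set d := deriv (ProbabilityTheory.cgf (fun k : ℤ => (k : ℝ)) (massMeasure θ)) β
  have hmoment := ProbabilityTheory.integrable_pow_mul_exp_of_mem_interior_integrableExpSet hβ
  have hvar : Integrable (fun k : ℤ => ((k : ℝ) - d) ^ 2 * Real.exp (β * k)) (massMeasure θ) := by
    refine (((hmoment 2).sub ((hmoment 1).const_mul (2 * d))).add
      ((hmoment 0).const_mul (d ^ 2))).congr (.of_forall fun k => ?_)
    simp only [Pi.add_apply, Pi.sub_apply]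
    ring
  obtain ⟨k₁, k₂, hk, hk₁, hk₂⟩ := hsupp
  obtain ⟨k, hkd, hθk⟩ : ∃ k : ℤ, (k : ℝ) ≠ d ∧ 0 < θ k := by
    by_cases h : (k₁ : ℝ) = d
    · exact ⟨k₂, fun h' => hk (by exact_mod_cast h.trans h'.symm), (hθ k₂).lt_of_ne' hk₂⟩
    · exact ⟨k₁, h, (hθ k₁).lt_of_ne' hk₁⟩
  refine div_pos (((integrable_massMeasure_iff hθ).mp hvar).tsum_pos (fun j => ?_) k ?_)
    (((integrable_massMeasure_iff hθ).mp (interior_subset (a := β) hβ)).tsum_pos (fun j => ?_) k ?_)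
  · exact mul_nonneg (by positivity) (hθ j)
  · exact mul_pos (mul_pos (sq_pos_of_ne_zero (sub_ne_zero.mpr hkd)) (Real.exp_pos _)) hθk
  · exact mul_nonneg (Real.exp_pos _).le (hθ j)
  · exact mul_pos (Real.exp_pos _) hθk

lemma exists_pos_le_sigmaT (hθ : ∀ k, 0 ≤ θ k) (hsupp : twoPointSupport θ) {K : Set ℝ}
    (hK : IsCompact K) (hKD : K ⊆ cgfDom θ) : ∃ m > 0, ∀ β ∈ K, m ≤ sigmaT θ β :=
  hK.exists_forall_le' ((continuousOn_iteratedDeriv_two_cgf hθ).mono hKD).sqrt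
    fun _ hβ => Real.sqrt_pos.mpr (iteratedDeriv_two_cgf_pos hθ hsupp (hKD hβ))

end massMeasure

theorem HasSum.norm_sub_sum_range_le_of_le_geometric {E : Type*} [SeminormedAddCommGroup E]
    {a : ℕ → E} {S : E} (hS : HasSum a S) {B t : ℝ} (ht : t < 1) (ha : ∀ j, ‖a j‖ ≤ B * t ^ j)
    (n : ℕ) : ‖S - ∑ j ∈ Finset.range n, a j‖ ≤ B * t ^ n / (1 - t) := by
  rw [norm_sub_rev, ← dist_eq_norm]
  refine dist_le_of_le_geometric_of_tendsto t B ht (fun j => ?_) hS.tendsto_sum_nat n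
  rw [dist_eq_norm, Finset.sum_range_succ, sub_add_cancel_left, norm_neg]
  exact ha j

theorem Complex.norm_sub_taylorSum_le {E : Type*} [NormedAddCommGroup E] [NormedSpace ℂ E]
    [CompleteSpace E] {f : ℂ → E} {c y : ℂ} {R B : ℝ}
    (hf : DifferentiableOn ℂ f (closedBall c R)) (hB : ∀ z ∈ sphere c R, ‖f z‖ ≤ B)
    (hy : ‖y‖ < R) (n : ℕ) :
    ‖f (c + y) - ∑ j ∈ Finset.range n, (j ! : ℂ)⁻¹ • y ^ j • iteratedDeriv j f c‖ ≤
      B * (‖y‖ / R) ^ n / (1 - ‖y‖ / R) := by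
  have hR : 0 < R := (norm_nonneg y).trans_lt hy
  have hsum := Complex.hasSum_taylorSeries_on_ball (hf.mono ball_subset_closedBall)
    (z := c + y) (by simpa using hy)
  simp only [add_sub_cancel_left] at hsum
  refine hsum.norm_sub_sum_range_le_of_le_geometric ((div_lt_one hR).mpr hy) (fun j => ?_) n
  have hcauchy := Complex.norm_iteratedDeriv_le_of_forall_mem_sphere_norm_le j hR
    (hf.diffContOnCl_ball subset_rfl) hB
  rw [norm_smul, norm_smul, norm_inv, norm_pow, Complex.norm_natCast, div_pow]
  calc (j ! : ℝ)⁻¹ * (‖y‖ ^ j * ‖iteratedDeriv j f c‖)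
      ≤ (j ! : ℝ)⁻¹ * (‖y‖ ^ j * (j ! * B / R ^ j)) := by gcongr
    _ = B * (‖y‖ ^ j / R ^ j) := by field_simp

theorem IsCompact.exists_norm_sub_taylorSum_le {E : Type*} [NormedAddCommGroup E]
    [NormedSpace ℂ E] [CompleteSpace E] {f : ℂ → E} {T : Set ℂ} (hT : IsCompact T) {R : ℝ}
    (hR : 0 < R) (hf : DifferentiableOn ℂ f (cthickening R T)) (n : ℕ) :
    ∃ C ≥ 0, ∀ c ∈ T, ∀ y : ℂ, ‖y‖ ≤ R / 2 →
      ‖f (c + y) - ∑ j ∈ Finset.range n, (j ! : ℂ)⁻¹ • y ^ j • iteratedDeriv j f c‖ ≤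
        C * ‖y‖ ^ n := by
  obtain ⟨B, hB⟩ := hT.cthickening.exists_bound_of_continuousOn hf.continuousOn
  obtain ⟨B, hB₀, hB⟩ : ∃ B' ≥ 0, ∀ z ∈ cthickening R T, ‖f z‖ ≤ B' :=
    ⟨max B 0, le_max_right _ _, fun z hz => (hB z hz).trans (le_max_left _ _)⟩
  refine ⟨2 * B / R ^ n, by positivity, fun c hc y hy => ?_⟩
  have hball : closedBall c R ⊆ cthickening R T := closedBall_subset_cthickening hc R
  have ht : ‖y‖ / R ≤ 1 / 2 := by rw [div_le_iff₀ hR]; linarith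
  calc _ ≤ B * (‖y‖ / R) ^ n / (1 - ‖y‖ / R) :=
        Complex.norm_sub_taylorSum_le (hf.mono hball)
          (fun z hz => hB z (hball (sphere_subset_closedBall hz))) (by linarith) n
    _ ≤ 2 * B * (‖y‖ / R) ^ n := by
        rw [div_le_iff₀ (by linarith)]
        nlinarith [mul_nonneg hB₀ (pow_nonneg (by positivity : 0 ≤ ‖y‖ / R) n)]
    _ = 2 * B / R ^ n * ‖y‖ ^ n := by rw [div_pow]; ring

theorem exists_exp_neg_mul_le_rpow {c : ℝ} (hc : 0 < c) (p : ℝ) :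
    ∃ M ≥ 0, ∀ n : ℕ, 0 < n → Real.exp (-c * n) ≤ M * (n : ℝ) ^ (-p) := by
  obtain ⟨M, hM⟩ := ((tendsto_rpow_mul_exp_neg_mul_atTop_nhds_zero p c hc).comp
    tendsto_natCast_atTop_atTop).bddAbove_range
  refine ⟨max M 0, le_max_right _ _, fun n hn => ?_⟩
  have hn' : (0 : ℝ) < n := by exact_mod_cast hn
  calc Real.exp (-c * n) = ((n : ℝ) ^ p * Real.exp (-c * n)) * (n : ℝ) ^ (-p) := by
        rw [Real.rpow_neg hn'.le]; field_simp
    _ ≤ max M 0 * (n : ℝ) ^ (-p) := by gcongr; exact (hM ⟨n, rfl⟩).trans (le_max_left _ _)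

theorem Real.rpow_neg_natCast_div_two {x : ℝ} (hx : 0 ≤ x) (j : ℕ) :
    x ^ (-(j : ℝ) / 2) = (√x ^ j)⁻¹ := by
  rw [show -(j : ℝ) / 2 = 1 / 2 * -(j : ℝ) by ring, Real.rpow_mul hx, ← Real.sqrt_eq_rpow,
    Real.rpow_neg (Real.sqrt_nonneg x), Real.rpow_natCast]

theorem Complex.sum_rpow_neg_div_two_mul_div_factorial_mul_pow {x : ℝ} (hx : 0 ≤ x)
    (a : ℕ → ℂ) (u : ℂ) (N : ℕ) :
    ∑ j ∈ Finset.range N, ((x ^ (-(j : ℝ) / 2) : ℝ) : ℂ) * (a j / j !) * u ^ j =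
      ∑ j ∈ Finset.range N, (j ! : ℂ)⁻¹ • (u / √x) ^ j • a j := by
  refine Finset.sum_congr rfl fun j _ => ?_
  rw [Real.rpow_neg_natCast_div_two hx, smul_eq_mul, smul_eq_mul, div_pow]
  push_cast
  ring

theorem norm_I_mul_div_mul_sqrt {σ x : ℝ} (hσ : 0 ≤ σ) (s : ℂ) :
    ‖Complex.I * s / ((σ : ℂ) * (√x : ℂ))‖ = ‖s‖ / (σ * √x) := by
  simp [abs_of_nonneg hσ, abs_of_nonneg (Real.sqrt_nonneg _)]

theorem norm_I_mul_div_mul_sqrt_pow_le {m σ x : ℝ} (hm : 0 < m) (hσ : m ≤ σ) (hx : 0 < x)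
    (s : ℂ) (k : ℕ) :
    ‖Complex.I * s / ((σ : ℂ) * (√x : ℂ))‖ ^ k ≤ (m ^ k)⁻¹ * x ^ (-(k : ℝ) / 2) * ‖s‖ ^ k :=
  calc _ ≤ (‖s‖ / (m * √x)) ^ k := by
        rw [norm_I_mul_div_mul_sqrt (hm.le.trans hσ)]
        gcongr
        exact div_nonneg (norm_nonneg s) (mul_nonneg (hm.le.trans hσ) (Real.sqrt_nonneg x))
    _ = _ := by
        rw [Real.rpow_neg_natCast_div_two hx.le, div_pow, mul_pow]
        field_simp

theorem Metric.infDist_le_of_mem_cthickening {α : Type*} [PseudoMetricSpace α] {x : α}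
    {s : Set α} {δ : ℝ} (hδ : 0 ≤ δ) (hx : x ∈ cthickening δ s) : infDist x s ≤ δ :=
  ENNReal.toReal_le_of_le_ofReal hδ (mem_cthickening_iff.mp hx)

theorem wn_taylor_uniform_bound_general
    (θ : ℤ → ℝ) (hθ0 : ∀ k, 0 ≤ θ k)
    (hsupp : twoPointSupport θ)
    (K : Set ℝ) (hK : IsCompact K) (hKD : K ⊆ cgfDom θ)
    (r : ℕ) (ε₀ : ℝ) (hε₀ : 0 < ε₀)
    (w : ℕ → ℂ → ℂ) (winf : ℂ → ℂ)
    (hwinf : DifferentiableOn ℂ winf {z : ℂ | infDist z (Complex.ofReal '' K) < 2 * ε₀})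
    (A c : ℝ) (hc : 0 < c)
    (hconv : ∀ n : ℕ, 1 ≤ n → ∀ z : ℂ, infDist z (Complex.ofReal '' K) ≤ ε₀ →
      ‖w n z - winf z‖ ≤ A * Real.exp (-c * n)) :
    ∃ ε > 0, ∃ M : ℝ, ∀ β ∈ K, ∀ n : ℕ, 1 ≤ n → ∀ s : ℂ,
      ‖s‖ ≤ ε * sigmaT θ β * Real.sqrt n →
      ‖w n ((β : ℂ) + Complex.I * s / (((sigmaT θ β : ℝ) : ℂ) * ((Real.sqrt n : ℝ) : ℂ))) -
          ∑ j ∈ Finset.range (r + 1),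
            (((n : ℝ) ^ (-(j : ℝ) / 2) : ℝ) : ℂ) *
              (iteratedDeriv j winf (β : ℂ) / (Nat.factorial j)) *
                (Complex.I * s / ((sigmaT θ β : ℝ) : ℂ)) ^ j‖ ≤
        M * (n : ℝ) ^ (-((r : ℝ) + 1) / 2) * (1 + ‖s‖ ^ (r + 1)) := by
  obtain ⟨m, hm, hmσ⟩ := exists_pos_le_sigmaT hθ0 hsupp hK hKD
  obtain ⟨C, hC₀, hC⟩ := (hK.image Complex.continuous_ofReal).exists_norm_sub_taylorSum_le hε₀
    (hwinf.mono fun z hz => (infDist_le_of_mem_cthickening hε₀.le hz).trans_lt (by linarith))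
    (r + 1)
  obtain ⟨M, hM₀, hM⟩ := exists_exp_neg_mul_le_rpow hc ((r + 1) / 2)
  refine ⟨ε₀ / 2, by positivity, |A| * M + C * (m ^ (r + 1))⁻¹, fun β hβ n hn s hs => ?_⟩
  set σ := sigmaT θ β
  have hσ : m ≤ σ := hmσ β hβ
  have hσ₀ : 0 < σ := hm.trans_le hσ
  have hn₀ : (0 : ℝ) < n := by exact_mod_cast hn
  set N := (n : ℝ) ^ (-((r : ℝ) + 1) / 2) with hN
  set y : ℂ := Complex.I * s / ((σ : ℂ) * (√n : ℂ))
  have hyε : ‖y‖ ≤ ε₀ / 2 := by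
    rw [norm_I_mul_div_mul_sqrt hσ₀.le, div_le_iff₀ (by positivity)]
    linarith
  have hyN : ‖y‖ ^ (r + 1) ≤ (m ^ (r + 1))⁻¹ * N * ‖s‖ ^ (r + 1) := by
    have h := norm_I_mul_div_mul_sqrt_pow_le hm hσ hn₀ s (r + 1)
    rwa [Nat.cast_succ] at h
  have hdist : infDist ((β : ℂ) + y) (Complex.ofReal '' K) ≤ ε₀ :=
    (infDist_le_dist_of_mem (mem_image_of_mem _ hβ)).trans (by rw [dist_self_add_left]; linarith)
  rw [Complex.sum_rpow_neg_div_two_mul_div_factorial_mul_pow hn₀.le, div_div]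
  refine (norm_sub_le_norm_sub_add_norm_sub _ (winf (β + y)) _).trans <|
    (add_le_add (hconv n hn _ hdist) (hC β (mem_image_of_mem _ hβ) y hyε)).trans ?_
  calc A * Real.exp (-c * n) + C * ‖y‖ ^ (r + 1)
      ≤ |A| * (M * N) + C * ((m ^ (r + 1))⁻¹ * N * ‖s‖ ^ (r + 1)) :=
        add_le_add (mul_le_mul (le_abs_self A) ((hM n hn).trans_eq (by rw [hN, neg_div]))
          (Real.exp_pos _).le (abs_nonneg A)) (mul_le_mul_of_nonneg_left hyN hC₀)
    _ ≤ (|A| * M + C * (m ^ (r + 1))⁻¹) * N * (1 + ‖s‖ ^ (r + 1)) := by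
        have hN₀ : 0 ≤ N := Real.rpow_nonneg hn₀.le _
        have hS := pow_nonneg (norm_nonneg s) (r + 1)
        nlinarith [mul_nonneg (mul_nonneg (mul_nonneg (abs_nonneg A) hM₀) hN₀) hS,
          mul_nonneg (mul_nonneg hC₀ (inv_nonneg.mpr (pow_nonneg hm.le (r + 1)))) hN₀]

/-- uniform Taylor-type bound, along the rescaled imaginary direction, for
holomorphic functions `w_n` converging exponentially fast to `w_∞` on a neighbourhood of
`K ⊂ 𝒟_φ ⊂ ℝ ⊂ ℂ`. -/
theorem wn_taylor_uniform_bound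
    (θ : ℤ → ℝ) (hθ0 : ∀ k, 0 ≤ θ k) (hθs : Summable θ) (hmass : 0 < ∑' k : ℤ, θ k)
    (hsupp : twoPointSupport θ)
    (K : Set ℝ) (hK : IsCompact K) (hKD : K ⊆ cgfDom θ)
    (r : ℕ) (ε₀ : ℝ) (hε₀ : 0 < ε₀)
    (w : ℕ → ℂ → ℂ) (winf : ℂ → ℂ)
    (hw : ∀ n : ℕ, 1 ≤ n →
      DifferentiableOn ℂ (w n) {z : ℂ | infDist z (Complex.ofReal '' K) < 2 * ε₀})
    (hwinf : DifferentiableOn ℂ winf {z : ℂ | infDist z (Complex.ofReal '' K) < 2 * ε₀})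
    (A c : ℝ) (hc : 0 < c)
    (hconv : ∀ n : ℕ, 1 ≤ n → ∀ z : ℂ, infDist z (Complex.ofReal '' K) ≤ ε₀ →
      ‖w n z - winf z‖ ≤ A * Real.exp (-c * n)) :
    ∃ ε > 0, ∃ M : ℝ, ∀ β ∈ K, ∀ n : ℕ, 1 ≤ n → ∀ s : ℂ,
      ‖s‖ ≤ ε * sigmaT θ β * Real.sqrt n →
      ‖w n ((β : ℂ) + Complex.I * s / (((sigmaT θ β : ℝ) : ℂ) * ((Real.sqrt n : ℝ) : ℂ))) -
          ∑ j ∈ Finset.range (r + 1),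
            (((n : ℝ) ^ (-(j : ℝ) / 2) : ℝ) : ℂ) *
              (iteratedDeriv j winf (β : ℂ) / (Nat.factorial j)) *
                (Complex.I * s / ((sigmaT θ β : ℝ) : ℂ)) ^ j‖ ≤
        M * (n : ℝ) ^ (-((r : ℝ) + 1) / 2) * (1 + ‖s‖ ^ (r + 1)) :=
  wn_taylor_uniform_bound_general θ hθ0 hsupp K hK hKD r ε₀ hε₀ w winf hwinf A c hc hconv

end
end
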